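/- Let G and H be connected graphs, at least one of which is not complete, and suppose neither G nor H is a tree. Then mc(G ⊠ H) ≥ max{|E(G)|·|V(H)| + 2·|E(G)|·|E(H)| + 2, |E(H)|·|V(G)| + 2·|E(G)|·|E(H)| + 2} and mc(G ⊠ H) ≤ |E(G)|·|V(H)| + |E(H)|·|V(G)| + 2·|E(G)|·|E(H)| − min{|V(G)|, |V(H)|} + 1. -/

import Mathlib

open SimpleGraph

/-- An edge-coloring `c` of `G` is a *monochromatic connection coloring* (MC-coloring)
if any two vertices of `G` are joined by a monochromatic walk, i.e. a walk all of whose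
edges receive the same color. -/
def SimpleGraph.IsMCColoring {V : Type*} (G : SimpleGraph V) (c : Sym2 V → ℕ) : Prop :=
  ∀ u v : V, ∃ w : G.Walk u v, ∃ k : ℕ, ∀ e ∈ w.edges, c e = k

/-- The *monochromatic connection number* `mc G`: the maximum number of colors used
on the edges of `G` by an MC-coloring of `G`. -/
noncomputable def SimpleGraph.mc {V : Type*} (G : SimpleGraph V) : ℕ :=
  sSup {n | ∃ c : Sym2 V → ℕ, G.IsMCColoring c ∧ (c '' G.edgeSet).ncard = n}

/-- The lexicographic product `G ∘ H`: `(g,h)` and `(g',h')` are adjacent iff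
`gg' ∈ E(G)`, or `g = g'` and `hh' ∈ E(H)`. -/
def SimpleGraph.lexProd {α β : Type*} (G : SimpleGraph α) (H : SimpleGraph β) :
    SimpleGraph (α × β) where
  Adj x y := G.Adj x.1 y.1 ∨ (x.1 = y.1 ∧ H.Adj x.2 y.2)
  symm := by
    constructor
    rintro x y (h | ⟨h1, h2⟩)
    · exact Or.inl h.symm
    · exact Or.inr ⟨h1.symm, h2.symm⟩
  loopless := by
    constructor
    rintro x (h | ⟨-, h⟩)
    · exact G.loopless.irrefl _ h
    · exact H.loopless.irrefl _ h

/-- The strong product `G ⊠ H`: `(g,h)` and `(g',h')` are adjacent iff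
`gg' ∈ E(G)` and `h = h'`, or `g = g'` and `hh' ∈ E(H)`, or `gg' ∈ E(G)` and `hh' ∈ E(H)`. -/
def SimpleGraph.strongProd {α β : Type*} (G : SimpleGraph α) (H : SimpleGraph β) :
    SimpleGraph (α × β) where
  Adj x y := (G.Adj x.1 y.1 ∧ x.2 = y.2) ∨ (x.1 = y.1 ∧ H.Adj x.2 y.2) ∨
      (G.Adj x.1 y.1 ∧ H.Adj x.2 y.2)
  symm := by
    constructor
    rintro x y (⟨h1, h2⟩ | ⟨h1, h2⟩ | ⟨h1, h2⟩)
    · exact Or.inl ⟨h1.symm, h2.symm⟩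
    · exact Or.inr (Or.inl ⟨h1.symm, h2.symm⟩)
    · exact Or.inr (Or.inr ⟨h1.symm, h2.symm⟩)
  loopless := by
    constructor
    rintro x (⟨h, -⟩ | ⟨-, h⟩ | ⟨h, -⟩)
    · exact G.loopless.irrefl _ h
    · exact H.loopless.irrefl _ h
    · exact G.loopless.irrefl _ h

/-- The direct (tensor) product `G × H`: `(g,h)` and `(g',h')` are adjacent iff
`gg' ∈ E(G)` and `hh' ∈ E(H)`. -/
def SimpleGraph.tensorProd {α β : Type*} (G : SimpleGraph α) (H : SimpleGraph β) :
    SimpleGraph (α × β) where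
  Adj x y := G.Adj x.1 y.1 ∧ H.Adj x.2 y.2
  symm := by
    constructor
    rintro x y ⟨h1, h2⟩
    exact ⟨h1.symm, h2.symm⟩
  loopless := by
    constructor
    rintro x ⟨h, -⟩
    exact G.loopless.irrefl _ h

/-- The Cartesian (box) product of a finite family of graphs: two tuples are adjacent
iff they agree in all coordinates but one, where they are adjacent. -/
def SimpleGraph.piBoxProd {n : ℕ} {V : Fin n → Type*} (G : ∀ i, SimpleGraph (V i)) :
    SimpleGraph (∀ i, V i) where
  Adj x y := ∃ i, (G i).Adj (x i) (y i) ∧ ∀ j, j ≠ i → x j = y j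
  symm := by
    constructor
    rintro x y ⟨i, hadj, heq⟩
    exact ⟨i, hadj.symm, fun j hj => (heq j hj).symm⟩
  loopless := by
    constructor
    rintro x ⟨i, hadj, -⟩
    exact (G i).loopless.irrefl _ hadj

/-- The (iterated, left-associated) lexicographic product of a finite family of graphs:
two tuples are adjacent iff at the least coordinate where they differ,
they are adjacent. -/
def SimpleGraph.piLexProd {n : ℕ} {V : Fin n → Type*} (G : ∀ i, SimpleGraph (V i)) :
    SimpleGraph (∀ i, V i) where
  Adj x y := ∃ i, (G i).Adj (x i) (y i) ∧ ∀ j, j < i → x j = y j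
  symm := by
    constructor
    rintro x y ⟨i, hadj, heq⟩
    exact ⟨i, hadj.symm, fun j hj => (heq j hj).symm⟩
  loopless := by
    constructor
    rintro x ⟨i, hadj, -⟩
    exact (G i).loopless.irrefl _ hadj

/-!
Lower bound: in a connected graph `Γ`, coloring a spanning tree with one color and every other
edge with a color of its own is an MC-coloring, so `mc Γ ≥ |E(Γ)| - |V(Γ)| + 2`. For
`Γ = G ⊠ H` the ordered pairs `(x, y)` with `x = y` or `x ~ y` form the product of the
corresponding sets for `G` and `H`, whence `|E(Γ)| = |E(G)||V(H)| + |E(H)||V(G)| + 2|E(G)||E(H)|`;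
and `|V| ≤ |E|` in a connected graph that is not a tree.

Upper bound: if `g, g'` are distinct and non-adjacent in `G`, the pairs `(g, h), (g', h)` for
`h ∈ V(H)` are disjoint non-adjacent pairs of `G ⊠ H`. In an MC-coloring, a color class that
joins `k ≥ 1` such pairs has at least `k + 1` edges: with only `k` edges and no isolated vertex
among the `2k` ends it would be a perfect matching of these ends, which joins no non-adjacent
pair. Every other color class has at least one edge, so `|E| ≥ #colors + |V(H)|`.
-/

open Finset Function

lemma Finset.card_image_add_card_le {α β ι : Type*} [DecidableEq β] [Fintype ι] (s : Finset α)
    (c : α → β) (κ : ι → β) (hlt : ∀ i, #{j | κ j = κ i} < #{e ∈ s | c e = κ i}) :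
    #(s.image c) + Fintype.card ι ≤ #s := by
  have hκ (i : ι) : κ i ∈ s.image c := by
    obtain ⟨e, he⟩ := card_pos.mp ((Nat.zero_le _).trans_lt (hlt i))
    exact mem_image.mpr ⟨e, (mem_filter.mp he).1, (mem_filter.mp he).2⟩
  have hfib : ∀ k ∈ s.image c, #{j | κ j = k} + 1 ≤ #{e ∈ s | c e = k} := by
    intro k hk
    by_cases h : ∃ i, κ i = k
    · obtain ⟨i, rfl⟩ := h
      exact hlt i
    · obtain ⟨e, he, rfl⟩ := mem_image.mp hk
      rw [filter_false_of_mem fun j _ => not_exists.mp h j, card_empty, zero_add]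
      exact card_pos.mpr ⟨e, mem_filter.mpr ⟨he, rfl⟩⟩
  calc #(s.image c) + Fintype.card ι = ∑ k ∈ s.image c, (#{j | κ j = k} + 1) := by
        rw [sum_add_distrib, ← card_eq_sum_card_fiberwise fun i _ => hκ i, card_univ,
          sum_const, smul_eq_mul, mul_one, add_comm]
    _ ≤ ∑ k ∈ s.image c, #{e ∈ s | c e = k} := sum_le_sum hfib
    _ = #s := (card_eq_sum_card_fiberwise fun e he => mem_image_of_mem c he).symm

namespace SimpleGraph

section Basic

variable {V : Type*} {G : SimpleGraph V}

lemma Connected.card_le_ncard_edgeSet_of_not_isTree [Finite V] (hG : G.Connected)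
    (hT : ¬ G.IsTree) : Nat.card V ≤ G.edgeSet.ncard := by
  have h := hG.card_vert_le_card_edgeSet_add_one
  have hne := mt (isTree_iff_connected_and_card.mpr ⟨hG, ·⟩) hT
  rw [Nat.card_coe_set_eq] at h hne
  omega

lemma Connected.nontrivial_of_not_isTree (hG : G.Connected) (hT : ¬ G.IsTree) :
    Nontrivial V := by
  by_contra hV
  rw [not_nontrivial_iff_subsingleton] at hV
  exact hT ⟨hG, isAcyclic_iff_forall_adj_isBridge.mpr fun u v huv =>
    (huv.ne (Subsingleton.elim u v)).elim⟩

lemma Reachable.exists_adj_adj_ne {u v : V} (h : G.Reachable u v) (hne : u ≠ v)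
    (hnadj : ¬ G.Adj u v) : ∃ x y z, G.Adj x y ∧ G.Adj x z ∧ y ≠ z := by
  by_contra! hdeg
  suffices ∀ {u v} (p : G.Walk u v), u = v ∨ G.Adj u v from (this h.some).elim hne hnadj
  intro u v p
  induction p with
  | nil => exact .inl rfl
  | cons huw _ ih =>
    rcases ih with rfl | hwv
    · exact .inr huw
    · exact .inl (hdeg _ _ _ huw.symm hwv)

-- One dart out of each `f j`: these have distinct sources, so they miss `x → y` or `x → z`.
lemma card_lt_card_dart [Fintype G.Dart] {κ : Type*} [Fintype κ] {f : κ → V} (hf : Injective f)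
    (hnbr : ∀ j, ∃ w, G.Adj (f j) w) {x y z : V} (hy : G.Adj x y) (hz : G.Adj x z)
    (hyz : y ≠ z) : Fintype.card κ < Fintype.card G.Dart := by
  choose w hw using hnbr
  let d (j : κ) : G.Dart := ⟨(f j, w j), hw j⟩
  have hd {j j'} (h : (d j).fst = (d j').fst) : j = j' := hf h
  refine Fintype.card_lt_of_injective_not_surjective d (fun j j' h => hd (by rw [h]))
    fun hsurj => ?_
  obtain ⟨j, hj⟩ := hsurj ⟨(x, y), hy⟩
  obtain ⟨j', hj'⟩ := hsurj ⟨(x, z), hz⟩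
  obtain rfl : j = j' := hd (by rw [hj, hj'])
  exact hyz (congrArg (·.snd) (hj.symm.trans hj'))

lemma card_lt_ncard_edgeSet_of_reachable [Finite V] {ι : Type*} [Fintype ι] [Nonempty ι]
    {a b : ι → V} (hab : Injective (Sum.elim a b)) (hreach : ∀ i, G.Reachable (a i) (b i))
    (hnadj : ∀ i, ¬ G.Adj (a i) (b i)) : Fintype.card ι < G.edgeSet.ncard := by
  classical
  have := Fintype.ofFinite V
  have hne (i : ι) : a i ≠ b i := hab.ne Sum.inl_ne_inr
  have hnbr {u v : V} (h : G.Reachable u v) (huv : u ≠ v) : ∃ w, G.Adj u w :=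
    ⟨_, h.some.adj_snd (Walk.not_nil_of_ne huv)⟩
  obtain ⟨i⟩ := ‹Nonempty ι›
  obtain ⟨x, y, z, hy, hz, hyz⟩ := (hreach i).exists_adj_adj_ne (hne i) (hnadj i)
  have := card_lt_card_dart hab (Sum.rec (fun i => hnbr (hreach i) (hne i))
    fun i => hnbr (hreach i).symm (hne i).symm) hy hz hyz
  rw [Fintype.card_sum, dart_card_eq_twice_card_edges, ← Set.ncard_coe_finset,
    coe_edgeFinset] at this
  omega

end Basic

section MCColoring

variable {V : Type*} {G : SimpleGraph V} {c : Sym2 V → ℕ}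

def colorClass (G : SimpleGraph V) (c : Sym2 V → ℕ) (k : ℕ) : SimpleGraph V :=
  G.deleteEdges {e | c e ≠ k}

lemma edgeSet_colorClass (k : ℕ) : (G.colorClass c k).edgeSet = {e ∈ G.edgeSet | c e = k} := by
  ext e
  simp [colorClass]

lemma IsMCColoring.exists_reachable_colorClass (hc : G.IsMCColoring c) (u v : V) :
    ∃ k, (G.colorClass c k).Reachable u v := by
  obtain ⟨w, k, hk⟩ := hc u v
  exact ⟨k, ⟨w.toDeleteEdges _ fun e he => by simp [hk e he]⟩⟩

lemma isMCColoring_of_connected_le {T : SimpleGraph V} (hT : T.Connected) (hTG : T ≤ G) {k : ℕ}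
    (hc : ∀ e ∈ T.edgeSet, c e = k) : G.IsMCColoring c := fun u v =>
  let p := (hT.preconnected u v).some
  ⟨p.transfer G fun _ he => edgeSet_mono hTG (p.edges_subset_edgeSet he), k, fun e he =>
    hc e (p.edges_subset_edgeSet (by rwa [Walk.edges_transfer] at he))⟩

lemma IsMCColoring.ncard_image_le_mc [Finite V] (hc : G.IsMCColoring c) :
    (c '' G.edgeSet).ncard ≤ G.mc :=
  le_csSup ⟨G.edgeSet.ncard, by rintro _ ⟨c', -, rfl⟩; exact Set.ncard_image_le G.edgeSet.toFinite⟩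
    ⟨c, hc, rfl⟩

lemma IsMCColoring.ncard_image_add_card_le [Finite V] (hc : G.IsMCColoring c) {ι : Type*}
    [Fintype ι] {a b : ι → V} (hab : Injective (Sum.elim a b))
    (hnadj : ∀ i, ¬ G.Adj (a i) (b i)) :
    (c '' G.edgeSet).ncard + Fintype.card ι ≤ G.edgeSet.ncard := by
  classical
  have := Fintype.ofFinite V
  choose κ hκ using fun i => hc.exists_reachable_colorClass (a i) (b i)
  have hclass (k : ℕ) : (G.colorClass c k).edgeSet.ncard = #{e ∈ G.edgeFinset | c e = k} := by
    rw [← Set.ncard_coe_finset, coe_filter, edgeSet_colorClass]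
    simp only [mem_edgeFinset]
  rw [← coe_edgeFinset, ← coe_image, Set.ncard_coe_finset, Set.ncard_coe_finset]
  refine card_image_add_card_le _ _ κ fun i => ?_
  rw [← hclass, ← Fintype.card_subtype]
  have : Nonempty {j // κ j = κ i} := ⟨⟨i, rfl⟩⟩
  refine card_lt_ncard_edgeSet_of_reachable (a := a ∘ Subtype.val) (b := b ∘ Subtype.val) ?_
    (fun j => by simpa only [comp_apply, j.2] using hκ j)
    fun j h => hnadj j (deleteEdges_le _ h)
  rw [← Sum.elim_comp_map]
  exact hab.comp (Subtype.val_injective.sumMap Subtype.val_injective)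

lemma Connected.mc_add_card_le [Finite V] (hG : G.Connected) {ι : Type*} [Finite ι]
    {a b : ι → V} (hab : Injective (Sum.elim a b)) (hnadj : ∀ i, ¬ G.Adj (a i) (b i)) :
    G.mc + Nat.card ι ≤ G.edgeSet.ncard := by
  have := Fintype.ofFinite ι
  rw [Nat.card_eq_fintype_card]
  have hmc : G.mc ≤ G.edgeSet.ncard - Fintype.card ι := by
    refine csSup_le' ?_
    rintro _ ⟨c, hc, rfl⟩
    have := hc.ncard_image_add_card_le hab hnadj
    omega
  have := (isMCColoring_of_connected_le hG le_rfl (c := fun _ => 0) fun _ _ => rfl)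
    |>.ncard_image_add_card_le hab hnadj
  omega

theorem Connected.ncard_edgeSet_add_two_le_mc_add_card [Finite V] [Nontrivial V]
    (hG : G.Connected) : G.edgeSet.ncard + 2 ≤ G.mc + Nat.card V := by
  classical
  obtain ⟨T, hTG, hT⟩ := hG.exists_isTree_le
  have hTE : T.edgeSet ⊆ G.edgeSet := edgeSet_mono hTG
  have hTcard : T.edgeSet.ncard + 1 = Nat.card V := (isTree_iff_connected_and_card.mp hT).2
  have hV : 1 < Nat.card V := Finite.one_lt_card
  obtain ⟨e₀, he₀⟩ : T.edgeSet.Nonempty := Set.nonempty_of_ncard_ne_zero (by omega)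
  obtain ⟨f, hf⟩ := exists_injective_nat (Sym2 V)
  let c (e : Sym2 V) : ℕ := if e ∈ T.edgeSet then 0 else f e + 1
  have himage : c '' G.edgeSet = insert 0 ((f · + 1) '' (G.edgeSet \ T.edgeSet)) := by
    refine (Set.image_subset_iff.mpr fun e he => ?_).antisymm
      (Set.insert_subset ⟨e₀, hTE he₀, if_pos he₀⟩ ?_)
    · by_cases heT : e ∈ T.edgeSet
      · simp [c, heT]
      · exact .inr ⟨e, ⟨he, heT⟩, (if_neg heT).symm⟩
    · rintro _ ⟨e, ⟨he, heT⟩, rfl⟩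
      exact ⟨e, he, if_neg heT⟩
  have hmc := (isMCColoring_of_connected_le hT.connected hTG (c := c) fun e he => if_pos he)
    |>.ncard_image_le_mc
  rw [himage, Set.ncard_insert_of_notMem (by simp) (G.edgeSet.toFinite.sdiff.image _),
    Set.ncard_image_of_injective _ fun _ _ h => hf (by simpa using h), Set.ncard_sdiff hTE] at hmc
  have := Set.ncard_le_ncard hTE
  omega

end MCColoring

section StrongProd

lemma card_filter_adj {V : Type*} [Fintype V] (G : SimpleGraph V) [DecidableRel G.Adj] :
    #{p : V × V | G.Adj p.1 p.2} = Fintype.card G.Dart := by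
  rw [← Fintype.card_subtype]
  exact Fintype.card_congr ⟨fun p => ⟨p.1, p.2⟩, fun d => ⟨d.toProd, d.adj⟩, fun _ => rfl,
    fun _ => rfl⟩

lemma card_filter_eq_or_adj {V : Type*} [Fintype V] [DecidableEq V] (G : SimpleGraph V)
    [DecidableRel G.Adj] :
    #{p : V × V | p.1 = p.2 ∨ G.Adj p.1 p.2} = Fintype.card V + 2 * #G.edgeFinset := by
  have hdiag : #{p : V × V | p.1 = p.2} = Fintype.card V := by
    rw [← univ_product_univ, ← diag_eq_filter, diag_card, card_univ]
  rw [filter_or, card_union_of_disjoint (disjoint_filter.mpr fun _ _ h hadj => hadj.ne h), hdiag,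
    card_filter_adj, dart_card_eq_twice_card_edges]

variable {α β : Type*} {G : SimpleGraph α} {H : SimpleGraph β}

lemma boxProd_le_strongProd : G.boxProd H ≤ G.strongProd H := by
  rintro x y (⟨hG, h⟩ | ⟨hH, h⟩)
  · exact .inl ⟨hG, h⟩
  · exact .inr (.inl ⟨h, hH⟩)

lemma Connected.strongProd (hG : G.Connected) (hH : H.Connected) : (G.strongProd H).Connected :=
  (hG.boxProd hH).mono boxProd_le_strongProd

@[simp]
lemma strongProd_adj_left {g g' : α} {h : β} :
    (G.strongProd H).Adj (g, h) (g', h) ↔ G.Adj g g' := by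
  simp [SimpleGraph.strongProd]

@[simp]
lemma strongProd_adj_right {g : α} {h h' : β} :
    (G.strongProd H).Adj (g, h) (g, h') ↔ H.Adj h h' := by
  simp [SimpleGraph.strongProd]

lemma eq_or_strongProd_adj_iff {x y : α × β} : x = y ∨ (G.strongProd H).Adj x y ↔
    (x.1 = y.1 ∨ G.Adj x.1 y.1) ∧ (x.2 = y.2 ∨ H.Adj x.2 y.2) := by
  simp only [SimpleGraph.strongProd, Prod.ext_iff]
  tauto

lemma ncard_edgeSet_strongProd [Finite α] [Finite β] (G : SimpleGraph α) (H : SimpleGraph β) :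
    (G.strongProd H).edgeSet.ncard = G.edgeSet.ncard * Nat.card β +
      H.edgeSet.ncard * Nat.card α + 2 * G.edgeSet.ncard * H.edgeSet.ncard := by
  classical
  have := Fintype.ofFinite α
  have := Fintype.ofFinite β
  have h : #{p : (α × β) × (α × β) | p.1 = p.2 ∨ (G.strongProd H).Adj p.1 p.2} =
      #{p : α × α | p.1 = p.2 ∨ G.Adj p.1 p.2} * #{p : β × β | p.1 = p.2 ∨ H.Adj p.1 p.2} := by
    rw [← card_product]
    exact (card_equiv (Equiv.prodProdProdComm α α β β) fun p => by
      simp [eq_or_strongProd_adj_iff]).symm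
  simp only [card_filter_eq_or_adj, Fintype.card_prod] at h
  simp only [← coe_edgeFinset, Set.ncard_coe_finset, Nat.card_eq_fintype_card]
  linarith

lemma mc_strongProd_add_card_right_le [Finite α] [Finite β] (hG : G.Connected)
    (hH : H.Connected) (hGtop : G ≠ ⊤) :
    (G.strongProd H).mc + Nat.card β ≤ (G.strongProd H).edgeSet.ncard := by
  obtain ⟨g, g', hne, hnadj⟩ := ne_top_iff_exists_not_adj.mp hGtop
  refine (hG.strongProd hH).mc_add_card_le (a := fun h => (g, h)) (b := fun h => (g', h))
    ?_ fun _ => strongProd_adj_left.not.mpr hnadj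
  exact Injective.sumElim (fun _ _ h => congrArg Prod.snd h) (fun _ _ h => congrArg Prod.snd h)
    fun _ _ h => hne (congrArg Prod.fst h)

lemma mc_strongProd_add_card_left_le [Finite α] [Finite β] (hG : G.Connected)
    (hH : H.Connected) (hHtop : H ≠ ⊤) :
    (G.strongProd H).mc + Nat.card α ≤ (G.strongProd H).edgeSet.ncard := by
  obtain ⟨h, h', hne, hnadj⟩ := ne_top_iff_exists_not_adj.mp hHtop
  refine (hG.strongProd hH).mc_add_card_le (a := fun g => (g, h)) (b := fun g => (g, h'))
    ?_ fun _ => strongProd_adj_right.not.mpr hnadj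
  exact Injective.sumElim (fun _ _ h => congrArg Prod.fst h) (fun _ _ h => congrArg Prod.fst h)
    fun _ _ h => hne (congrArg Prod.snd h)

end StrongProd

end SimpleGraph

/-- Theorem 2.3(1): for connected `G`, `H`, at least one not complete, neither a tree:
`mc(G ⊠ H) ≥ max{|E(G)||V(H)| + 2|E(G)||E(H)| + 2, |E(H)||V(G)| + 2|E(G)||E(H)| + 2}` and
`mc(G ⊠ H) ≤ |E(G)||V(H)| + |E(H)||V(G)| + 2|E(G)||E(H)| - min{|V(G)|, |V(H)|} + 1`. -/
theorem mc_strongProd_of_not_tree {α β : Type*} [Fintype α] [Fintype β]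
    (G : SimpleGraph α) (H : SimpleGraph β)
    (hG : G.Connected) (hH : H.Connected)
    (hc : G ≠ ⊤ ∨ H ≠ ⊤)
    (hGt : ¬ G.IsTree) (hHt : ¬ H.IsTree) :
    max (G.edgeSet.ncard * Nat.card β + 2 * G.edgeSet.ncard * H.edgeSet.ncard + 2)
        (H.edgeSet.ncard * Nat.card α + 2 * G.edgeSet.ncard * H.edgeSet.ncard + 2) ≤
      (G.strongProd H).mc ∧
    (G.strongProd H).mc ≤
      G.edgeSet.ncard * Nat.card β + H.edgeSet.ncard * Nat.card α +
        2 * G.edgeSet.ncard * H.edgeSet.ncard - min (Nat.card α) (Nat.card β) + 1 := by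
  have := hG.nontrivial_of_not_isTree hGt
  have := hH.nonempty
  have hα : Nat.card α * Nat.card β ≤ G.edgeSet.ncard * Nat.card β :=
    Nat.mul_le_mul_right _ (hG.card_le_ncard_edgeSet_of_not_isTree hGt)
  have hβ : Nat.card α * Nat.card β ≤ H.edgeSet.ncard * Nat.card α := by
    rw [mul_comm]
    exact Nat.mul_le_mul_right _ (hH.card_le_ncard_edgeSet_of_not_isTree hHt)
  have hlow := (hG.strongProd hH).ncard_edgeSet_add_two_le_mc_add_card
  have hup : (G.strongProd H).mc + min (Nat.card α) (Nat.card β) ≤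
      (G.strongProd H).edgeSet.ncard := by
    rcases hc with hGtop | hHtop
    · exact (Nat.add_le_add_left (min_le_right _ _) _).trans
        (mc_strongProd_add_card_right_le hG hH hGtop)
    · exact (Nat.add_le_add_left (min_le_left _ _) _).trans
        (mc_strongProd_add_card_left_le hG hH hHtop)
  rw [ncard_edgeSet_strongProd, Nat.card_prod] at hlow
  rw [ncard_edgeSet_strongProd] at hup
  exact ⟨max_le (by omega) (by omega), by omega⟩
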